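/- Suppose χ is in the asymptotic chamber, Λ ≥_χ M, Λ ≠ M, and there exists k with |λ^i| = |μ^i| for all i < k and |λ^k| > |μ^k|. Then the multipartition Λ' obtained from Λ by removing the lowermost removable box from λ^k and adding a box to the first row of λ^{k+1} satisfies Λ ⊳_χ Λ' and Λ' ≥_χ M. -/

import Mathlib

open Finset

/-- Boxes of a multipartition, as triples (component, (row, col)). -/
def mbBoxes {r : ℕ} (Λ : Fin r → YoungDiagram) : Finset (Fin r × ℕ × ℕ) :=
  Finset.univ.biUnion fun i => (Λ i).cells.image fun c => (i, c)

/-- Shifted content of a box (i, (y, x)): χ i + x - y. -/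
def cont {r : ℕ} (χ : Fin r → ℚ) (b : Fin r × ℕ × ℕ) : ℚ :=
  χ b.1 + (b.2.2 : ℚ) - (b.2.1 : ℚ)

/-- Λ is an r-multipartition of n. -/
def isMP {r : ℕ} (n : ℕ) (Λ : Fin r → YoungDiagram) : Prop :=
  ∑ i, (Λ i).card = n

/-- The order ≥_χ : a bijection of boxes with contents of Λ-boxes dominating. -/
def contGE {r : ℕ} (χ : Fin r → ℚ) (Λ M : Fin r → YoungDiagram) : Prop :=
  ∃ e : ↥(mbBoxes Λ) ≃ ↥(mbBoxes M),
    ∀ b : ↥(mbBoxes Λ), cont χ (b : Fin r × ℕ × ℕ) ≥ cont χ ((e b : Fin r × ℕ × ℕ))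

/-- χ is generic for n: χ i - χ j avoids {0, ±1, …, ±(n-1)} for i ≠ j. -/
def generic (n : ℕ) {r : ℕ} (χ : Fin r → ℚ) : Prop :=
  ∀ i j : Fin r, i ≠ j → ∀ k : ℤ, k.natAbs < n → χ i - χ j ≠ (k : ℚ)

/-- Adjacency with explicit witnesses: Λ∖M lives in component l, M∖Λ in component m,
and they correspond under translation by (dy, dx). -/
def adjWitness {r : ℕ} (Λ M : Fin r → YoungDiagram) (l m : Fin r) (dy dx : ℤ) : Prop :=
  (∀ i, i ≠ l → ∀ c ∈ (Λ i).cells, c ∈ (M i).cells) ∧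
  (∀ i, i ≠ m → ∀ c ∈ (M i).cells, c ∈ (Λ i).cells) ∧
  (∀ y x : ℕ, ((y, x) ∈ (Λ l).cells ∧ (y, x) ∉ (M l).cells) ↔
    ∃ y' x' : ℕ, ((y', x') ∈ (M m).cells ∧ (y', x') ∉ (Λ m).cells) ∧
      (y' : ℤ) = (y : ℤ) + dy ∧ (x' : ℤ) = (x : ℤ) + dx)

def adjacent {r : ℕ} (Λ M : Fin r → YoungDiagram) : Prop :=
  ∃ l m dy dx, adjWitness Λ M l m dy dx

/-- One step of the adjacency order. -/
def adjStep {r : ℕ} (χ : Fin r → ℚ) (Λ M : Fin r → YoungDiagram) : Prop :=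
  adjacent Λ M ∧ contGE χ Λ M

/-- The adjacency order ⊵_χ : transitive closure of single steps. -/
def adjOrder {r : ℕ} (χ : Fin r → ℚ) : (Fin r → YoungDiagram) → (Fin r → YoungDiagram) → Prop :=
  Relation.ReflTransGen (adjStep χ)

/-- Multiset of shifted contents of the boxes of Λ. -/
def contMultiset {r : ℕ} (χ : Fin r → ℚ) (Λ : Fin r → YoungDiagram) : Multiset ℚ :=
  (mbBoxes Λ).val.map (cont χ)

/-- χ lies in the asymptotic chamber: χ_i − χ_{i+1} > n − 1. -/
def asymptotic (n : ℕ) {r : ℕ} (χ : Fin r → ℚ) : Prop :=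
  ∀ i : ℕ, ∀ h : i + 1 < r, χ ⟨i, Nat.lt_of_succ_lt h⟩ - χ ⟨i + 1, h⟩ > (n : ℚ) - 1

/-- Concatenated padded row-length sequence: Λ_{n·k+i} = λ^{k+1}_i (0-indexed here). -/
def rowSeq (n : ℕ) {r : ℕ} (Λ : Fin r → YoungDiagram) (t : ℕ) : ℕ :=
  if h : t / n < r then (Λ ⟨t / n, h⟩).rowLen (t % n) else 0

/-- Shifted contents sorted in decreasing order. -/
def descContents {r : ℕ} (χ : Fin r → ℚ) (Λ : Fin r → YoungDiagram) : List ℚ :=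
  (contMultiset χ Λ).sort (· ≥ ·)

lemma mem_mbBoxes {r : ℕ} {Λ : Fin r → YoungDiagram} {b : Fin r × ℕ × ℕ} :
    b ∈ mbBoxes Λ ↔ b.2 ∈ (Λ b.1).cells := by
  rcases b with ⟨i, c⟩
  simp only [mbBoxes, Finset.mem_biUnion, Finset.mem_univ, true_and, Finset.mem_image]
  constructor
  · rintro ⟨j, d, hd, h⟩
    obtain ⟨rfl, rfl⟩ : j = i ∧ d = c := by simpa [Prod.ext_iff] using h
    exact hd
  · intro h; exact ⟨i, c, h, rfl⟩

lemma card_mbBoxes {r : ℕ} (Λ : Fin r → YoungDiagram) :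
    (mbBoxes Λ).card = ∑ i, (Λ i).card := by
  rw [mbBoxes, Finset.card_biUnion]
  · refine Finset.sum_congr rfl fun i _ => ?_
    have hinj : Function.Injective (fun c : ℕ × ℕ => ((i, c) : Fin r × ℕ × ℕ)) := by
      intro a b h; simpa [Prod.ext_iff] using h
    rw [Finset.card_image_of_injective _ hinj]
  · intro i _ j _ hij
    simp only [Finset.disjoint_left, Finset.mem_image]
    rintro a ⟨c, _, rfl⟩ ⟨d, _, h⟩
    simp only [Prod.ext_iff] at h
    exact hij h.1.symm

section Counting
variable {α : Type*} [DecidableEq α]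

lemma count_le_of_equiv (w v : α → ℚ) (S T : Finset α)
    (e : ↥S ≃ ↥T) (he : ∀ a : ↥S, v ((e a : α)) ≤ w (a : α)) (c : ℚ) :
    (T.filter fun b => c ≤ v b).card ≤ (S.filter fun a => c ≤ w a).card := by
  classical
  have hinj : ∀ x ∈ T.filter fun b => c ≤ v b, ∀ y ∈ T.filter fun b => c ≤ v b,
      (fun b => if h : b ∈ T then ((e.symm ⟨b, h⟩ : ↥S) : α) else b) x =
      (fun b => if h : b ∈ T then ((e.symm ⟨b, h⟩ : ↥S) : α) else b) y → x = y := by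
    intro x hx y hy hxy
    have hxT : x ∈ T := (Finset.mem_filter.mp hx).1
    have hyT : y ∈ T := (Finset.mem_filter.mp hy).1
    simp only [dif_pos hxT, dif_pos hyT] at hxy
    have := e.symm.injective (Subtype.ext hxy)
    exact congrArg Subtype.val this
  refine Finset.card_le_card_of_injOn _ ?_ hinj
  intro b hb
  have hbT : b ∈ T := (Finset.mem_filter.mp hb).1
  have hbv : c ≤ v b := (Finset.mem_filter.mp hb).2
  simp only [dif_pos hbT]
  refine Finset.mem_filter.mpr ⟨Finset.coe_mem _, ?_⟩
  have := he (e.symm ⟨b, hbT⟩)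
  rw [Equiv.apply_symm_apply] at this
  exact le_trans hbv this

lemma exists_fun_of_counts (w v : α → ℚ) :
    ∀ N (S T : Finset α), T.card = N → S.card = T.card →
    (∀ c : ℚ, (T.filter fun b => c ≤ v b).card ≤ (S.filter fun a => c ≤ w a).card) →
    ∃ f : α → α, Set.InjOn f S ∧ (∀ a ∈ S, f a ∈ T) ∧ (∀ b ∈ T, ∃ a ∈ S, f a = b) ∧
      ∀ a ∈ S, v (f a) ≤ w a := by
  classical
  intro N
  induction N with
  | zero =>
    intro S T hT hS _
    have hT0 : T = ∅ := Finset.card_eq_zero.mp hT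
    have hS0 : S = ∅ := Finset.card_eq_zero.mp (by rw [hS, hT])
    exact ⟨id, by simp [hS0], by simp [hS0], by simp [hT0], by simp [hS0]⟩
  | succ N ih =>
    intro S T hT hS hcount
    have hTne : T.Nonempty := Finset.card_pos.mp (by omega)
    have hSne : S.Nonempty := Finset.card_pos.mp (by rw [hS]; omega)
    obtain ⟨b, hbT, hbmax⟩ := T.exists_max_image v hTne
    obtain ⟨a, haS, hamax⟩ := S.exists_max_image w hSne
    have hvw : v b ≤ w a := by
      have h1 : 1 ≤ (T.filter fun x => v b ≤ v x).card :=
        Finset.card_pos.mpr ⟨b, Finset.mem_filter.mpr ⟨hbT, le_refl _⟩⟩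
      have h2 := hcount (v b)
      have h3 : (S.filter fun x => v b ≤ w x).Nonempty :=
        Finset.card_pos.mp (lt_of_lt_of_le (lt_of_lt_of_le one_pos h1) h2)
      obtain ⟨a', ha'⟩ := h3
      exact le_trans (Finset.mem_filter.mp ha').2 (hamax a' (Finset.mem_filter.mp ha').1)
    have hcount' : ∀ c : ℚ, ((T.erase b).filter fun x => c ≤ v x).card ≤
        ((S.erase a).filter fun x => c ≤ w x).card := by
      intro c
      by_cases hc : c ≤ v b
      · rw [Finset.filter_erase, Finset.filter_erase]
        have hb' : b ∈ T.filter fun x => c ≤ v x := Finset.mem_filter.mpr ⟨hbT, hc⟩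
        have ha' : a ∈ S.filter fun x => c ≤ w x :=
          Finset.mem_filter.mpr ⟨haS, le_trans hc hvw⟩
        rw [Finset.card_erase_of_mem hb', Finset.card_erase_of_mem ha']
        exact Nat.sub_le_sub_right (hcount c) 1
      · have : (T.erase b).filter (fun x => c ≤ v x) = ∅ := by
          refine Finset.filter_eq_empty_iff.mpr ?_
          intro x hx
          have := hbmax x (Finset.mem_of_mem_erase hx)
          intro hcx; exact hc (le_trans hcx this)
        rw [this]; simp
    obtain ⟨f', hinj', hmap', hsurj', hbd'⟩ := ih (S.erase a) (T.erase b)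
      (by rw [Finset.card_erase_of_mem hbT, hT]; rfl)
      (by rw [Finset.card_erase_of_mem hbT, Finset.card_erase_of_mem haS, hS]) hcount'
    refine ⟨fun x => if x = a then b else f' x, ?_, ?_, ?_, ?_⟩
    · intro x hx y hy hxy
      simp only at hxy
      by_cases hxa : x = a <;> by_cases hya : y = a
      · rw [hxa, hya]
      · rw [if_pos hxa, if_neg hya] at hxy
        have : f' y ∈ T.erase b := hmap' y (Finset.mem_erase.mpr ⟨hya, hy⟩)
        exact absurd (hxy ▸ this) (by simp)
      · rw [if_neg hxa, if_pos hya] at hxy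
        have : f' x ∈ T.erase b := hmap' x (Finset.mem_erase.mpr ⟨hxa, hx⟩)
        exact absurd (hxy.symm ▸ this) (by simp)
      · rw [if_neg hxa, if_neg hya] at hxy
        exact hinj' (Finset.mem_coe.mpr (Finset.mem_erase.mpr ⟨hxa, hx⟩))
          (Finset.mem_coe.mpr (Finset.mem_erase.mpr ⟨hya, hy⟩)) hxy
    · intro x hx
      by_cases hxa : x = a
      · simp only [if_pos hxa]; exact hbT
      · simp only [if_neg hxa]
        exact Finset.mem_of_mem_erase (hmap' x (Finset.mem_erase.mpr ⟨hxa, hx⟩))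
    · intro t ht
      by_cases htb : t = b
      · exact ⟨a, haS, by simp [htb]⟩
      · obtain ⟨x, hx, hfx⟩ := hsurj' t (Finset.mem_erase.mpr ⟨htb, ht⟩)
        have hxa : x ≠ a := (Finset.mem_erase.mp hx).1
        exact ⟨x, Finset.mem_of_mem_erase hx, by simp [hxa, hfx]⟩
    · intro x hx
      by_cases hxa : x = a
      · simp only [if_pos hxa, hxa]; exact hvw
      · simp only [if_neg hxa]
        exact hbd' x (Finset.mem_erase.mpr ⟨hxa, hx⟩)

lemma exists_equiv_of_counts (w v : α → ℚ) (S T : Finset α) (hcard : S.card = T.card)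
    (hcount : ∀ c : ℚ, (T.filter fun b => c ≤ v b).card ≤ (S.filter fun a => c ≤ w a).card) :
    ∃ e : ↥S ≃ ↥T, ∀ a : ↥S, v ((e a : α)) ≤ w (a : α) := by
  classical
  obtain ⟨f, hinj, hmap, hsurj, hbd⟩ := exists_fun_of_counts w v T.card S T rfl hcard hcount
  have hbij : Function.Bijective (fun x : ↥S => (⟨f x, hmap x x.2⟩ : ↥T)) := by
    constructor
    · intro x y hxy
      exact Subtype.ext (hinj (Finset.mem_coe.mpr x.2) (Finset.mem_coe.mpr y.2)
        (congrArg Subtype.val hxy))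
    · intro t
      obtain ⟨x, hx, hfx⟩ := hsurj t t.2
      exact ⟨⟨x, hx⟩, Subtype.ext hfx⟩
  exact ⟨Equiv.ofBijective _ hbij, fun a => hbd a a.2⟩

end Counting

/-- count of cells with diagonal (content offset) ≥ d -/
def Dcnt (P : YoungDiagram) (d : ℤ) : ℕ :=
  (P.cells.filter fun z => d ≤ (z.2 : ℤ) - (z.1 : ℤ)).card

/-- count of cells on diagonal exactly j -/
def dgc (P : YoungDiagram) (j : ℤ) : ℕ :=
  (P.cells.filter fun z => (z.2 : ℤ) - (z.1 : ℤ) = j).card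

/-- count of cells with shifted content ≥ c -/
def cnt (P : YoungDiagram) (χ c : ℚ) : ℕ :=
  (P.cells.filter fun z => c ≤ χ + (z.2 : ℚ) - (z.1 : ℚ)).card

lemma cell_mem_iff {P : YoungDiagram} {z : ℕ × ℕ} : z ∈ P.cells ↔ z.2 < P.rowLen z.1 := by
  rw [YoungDiagram.mem_cells, ← YoungDiagram.mem_iff_lt_rowLen]

lemma cell_row_lt {P : YoungDiagram} {z : ℕ × ℕ} (hz : z ∈ P.cells) : z.1 < P.colLen 0 := by
  have h1 : z.1 < P.colLen z.2 := by
    rw [YoungDiagram.mem_cells, YoungDiagram.mem_iff_lt_colLen] at hz; exact hz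
  exact lt_of_lt_of_le h1 (P.colLen_anti 0 z.2 (Nat.zero_le _))

lemma cell_col_lt {P : YoungDiagram} {z : ℕ × ℕ} (hz : z ∈ P.cells) : z.2 < P.rowLen 0 := by
  have h1 : z.2 < P.rowLen z.1 := cell_mem_iff.mp hz
  exact lt_of_lt_of_le h1 (P.rowLen_anti 0 z.1 (Nat.zero_le _))

lemma colLen_le_card (P : YoungDiagram) : P.colLen 0 ≤ P.card := by
  rw [YoungDiagram.colLen_eq_card]
  exact Finset.card_le_card (Finset.filter_subset _ _)

lemma rowLen_le_card (P : YoungDiagram) : P.rowLen 0 ≤ P.card := by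
  rw [YoungDiagram.rowLen_eq_card]
  exact Finset.card_le_card (Finset.filter_subset _ _)

lemma cnt_eq_Dcnt (P : YoungDiagram) (χ c : ℚ) : cnt P χ c = Dcnt P ⌈c - χ⌉ := by
  unfold cnt Dcnt
  congr 1
  apply Finset.filter_congr
  intro z _
  constructor
  · intro h
    apply Int.ceil_le.mpr
    push_cast
    linarith
  · intro h
    have := Int.le_ceil (c - χ)
    have h2 : ((⌈c - χ⌉ : ℤ) : ℚ) ≤ ((z.2 : ℤ) - (z.1 : ℤ) : ℤ) := by exact_mod_cast h
    push_cast at h2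
    linarith

lemma Dcnt_le_card (P : YoungDiagram) (d : ℤ) : Dcnt P d ≤ P.card :=
  Finset.card_le_card (Finset.filter_subset _ _)

lemma Dcnt_eq_card (P : YoungDiagram) {d : ℤ} (h : d ≤ 1 - (P.colLen 0 : ℤ)) :
    Dcnt P d = P.card := by
  unfold Dcnt
  rw [Finset.filter_true_of_mem]
  intro z hz
  have := cell_row_lt hz
  omega

lemma Dcnt_split (P : YoungDiagram) (j : ℤ) : Dcnt P (j - 1) = Dcnt P j + dgc P (j - 1) := by
  unfold Dcnt dgc
  rw [← Finset.card_union_of_disjoint]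
  · congr 1
    ext z
    simp only [Finset.mem_union, Finset.mem_filter]
    constructor
    · rintro ⟨hz, h⟩
      rcases eq_or_lt_of_le h with h' | h'
      · exact Or.inr ⟨hz, h'.symm⟩
      · exact Or.inl ⟨hz, by omega⟩
    · rintro (⟨hz, h⟩ | ⟨hz, h⟩)
      · exact ⟨hz, by omega⟩
      · exact ⟨hz, by omega⟩
  · simp only [Finset.disjoint_left, Finset.mem_filter]
    rintro z ⟨_, h1⟩ ⟨_, h2⟩
    omega

/-- cells on diag exactly j, with the corner structure: count formula -/
lemma dgc_corner (ν : YoungDiagram) (R C : ℕ) (hcol : ν.colLen 0 = R + 1)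
    (hrow : ν.rowLen R = C + 1) {j : ℤ} (hj : j ≤ (C : ℤ) - R) :
    dgc ν j = (R + 1) - (-j).toNat := by
  have hrowlong : ∀ y : ℕ, y ≤ R → C + 1 ≤ ν.rowLen y := by
    intro y hy
    calc C + 1 = ν.rowLen R := hrow.symm
    _ ≤ ν.rowLen y := ν.rowLen_anti y R hy
  unfold dgc
  have himg : ν.cells.filter (fun z => (z.2 : ℤ) - (z.1 : ℤ) = j) =
      (Finset.Ico ((-j).toNat) (R + 1)).image (fun y : ℕ => (y, ((y : ℤ) + j).toNat)) := by
    ext z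
    simp only [Finset.mem_filter, Finset.mem_image, Finset.mem_Ico]
    constructor
    · rintro ⟨hz, hdiag⟩
      have hy : z.1 < R + 1 := by rw [← hcol]; exact cell_row_lt hz
      refine ⟨z.1, ⟨by omega, hy⟩, ?_⟩
      have : ((z.1 : ℤ) + j).toNat = z.2 := by omega
      rw [this]
    · rintro ⟨y, ⟨hy1, hy2⟩, rfl⟩
      have hyj : 0 ≤ (y : ℤ) + j := by omega
      constructor
      · rw [cell_mem_iff]
        simp only
        have h1 : (((y : ℤ) + j).toNat : ℤ) = (y : ℤ) + j := Int.toNat_of_nonneg hyj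
        have h2 : ((y : ℤ) + j) ≤ C := by omega
        have h3 : C + 1 ≤ ν.rowLen y := hrowlong y (by omega)
        omega
      · simp only
        omega
  rw [himg, Finset.card_image_of_injOn, Nat.card_Ico]
  intro x _ y _ hxy
  exact (Prod.ext_iff.mp hxy).1

/-- one per column injection: dgc at j-1 at least dgc at j minus (1 if j ≤ 0) -/
lemma dgc_step (ρ : YoungDiagram) (j : ℤ) :
    dgc ρ j ≤ dgc ρ (j - 1) + (if 1 ≤ j then 0 else 1) := by
  classical
  unfold dgc
  set f : ℕ × ℕ → ℕ × ℕ := fun z => (z.1, z.2 - 1) with hf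
  by_cases hj : 1 ≤ j
  · simp only [if_pos hj, Nat.add_zero]
    apply Finset.card_le_card_of_injOn f
    · intro z hz
      obtain ⟨hz, hd⟩ := Finset.mem_filter.mp hz
      have hz2 : 1 ≤ z.2 := by omega
      refine Finset.mem_filter.mpr ⟨?_, ?_⟩
      · rw [cell_mem_iff] at hz ⊢
        simp only [hf]
        omega
      · simp only [hf]
        omega
    · intro x hx y hy hxy
      obtain ⟨_, hdx⟩ := Finset.mem_filter.mp hx
      obtain ⟨_, hdy⟩ := Finset.mem_filter.mp hy
      simp only [hf, Prod.ext_iff] at hxy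
      obtain ⟨h1, h2⟩ := hxy
      have hx2 : 1 ≤ x.2 := by omega
      have hy2 : 1 ≤ y.2 := by omega
      exact Prod.ext_iff.mpr ⟨h1, by omega⟩
  · -- split off cells with z.2 = 0 (at most one)
    have hsplit : (ρ.cells.filter fun z => (z.2 : ℤ) - (z.1 : ℤ) = j) ⊆
        ((ρ.cells.filter fun z => ((z.2 : ℤ) - (z.1 : ℤ) = j ∧ 1 ≤ z.2))) ∪ {((-j).toNat, 0)} := by
      intro z hz
      obtain ⟨hz1, hz2⟩ := Finset.mem_filter.mp hz
      rcases Nat.eq_zero_or_pos z.2 with h0 | h1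
      · apply Finset.mem_union_right
        simp only [Finset.mem_singleton]
        have : z = (z.1, z.2) := rfl
        rw [this, h0]
        have : (z.1 : ℤ) = -j := by omega
        congr 1
        omega
      · exact Finset.mem_union_left _ (Finset.mem_filter.mpr ⟨hz1, hz2, h1⟩)
    calc (ρ.cells.filter fun z => (z.2 : ℤ) - (z.1 : ℤ) = j).card
        ≤ ((ρ.cells.filter fun z => ((z.2 : ℤ) - (z.1 : ℤ) = j ∧ 1 ≤ z.2)) ∪ {((-j).toNat, 0)}).card :=
          Finset.card_le_card hsplit
      _ ≤ (ρ.cells.filter fun z => ((z.2 : ℤ) - (z.1 : ℤ) = j ∧ 1 ≤ z.2)).card + 1 := by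
          apply le_trans (Finset.card_union_le _ _)
          simp
      _ ≤ (ρ.cells.filter fun z => (z.2 : ℤ) - (z.1 : ℤ) = j - 1).card + 1 := by
          refine Nat.add_le_add_right ?_ 1
          apply Finset.card_le_card_of_injOn f
          · intro z hz
            obtain ⟨hz, hd, hz2⟩ := Finset.mem_filter.mp hz
            refine Finset.mem_filter.mpr ⟨?_, ?_⟩
            · rw [cell_mem_iff] at hz ⊢
              simp only [hf]
              omega
            · simp only [hf]
              omega
          · intro x hx y hy hxy
            obtain ⟨_, _, hx2⟩ := Finset.mem_filter.mp hx
            obtain ⟨_, _, hy2⟩ := Finset.mem_filter.mp hy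
            simp only [hf, Prod.ext_iff] at hxy
            obtain ⟨h1, h2⟩ := hxy
            exact Prod.ext_iff.mpr ⟨h1, by omega⟩
      _ = (ρ.cells.filter fun z => (z.2 : ℤ) - (z.1 : ℤ) = j - 1).card + (if 1 ≤ j then 0 else 1) := by
          rw [if_neg hj]

/-- rectangle bound -/
lemma rect_le_card (ν : YoungDiagram) (R C : ℕ) (hcol : ν.colLen 0 = R + 1)
    (hrow : ν.rowLen R = C + 1) : (R + 1) * (C + 1) ≤ ν.card := by
  have hsub : (Finset.range (R + 1)) ×ˢ (Finset.range (C + 1)) ⊆ ν.cells := by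
    intro z hz
    obtain ⟨hy, hx⟩ := Finset.mem_product.mp hz
    rw [Finset.mem_range] at hy hx
    rw [cell_mem_iff]
    calc z.2 < C + 1 := hx
    _ = ν.rowLen R := hrow.symm
    _ ≤ ν.rowLen z.1 := ν.rowLen_anti z.1 R (by omega)
  calc (R + 1) * (C + 1) = ((Finset.range (R + 1)) ×ˢ (Finset.range (C + 1))).card := by
        rw [Finset.card_product, Finset.card_range, Finset.card_range]
    _ ≤ ν.cells.card := Finset.card_le_card hsub

lemma cnt_sub_int (P : YoungDiagram) (χ c : ℚ) (k : ℤ) :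
    cnt P χ (c - (k : ℚ)) = Dcnt P (⌈c - χ⌉ - k) := by
  rw [cnt_eq_Dcnt]
  congr 1
  rw [show c - (k : ℚ) - χ = (c - χ) - (k : ℚ) by ring, Int.ceil_sub_intCast]

theorem local_strict (ν ρ σ : YoungDiagram) (L : ℕ) (a b : ℚ)
    (hst : ρ.card < ν.card)
    (hg : (ν.card : ℚ) + (L : ℚ) - 1 < a - b)
    (R C : ℕ) (hcol : ν.colLen 0 = R + 1) (hrow : ν.rowLen R = C + 1)
    (Hdom : ∀ c' : ℚ, b + L ≤ c' → c' ≤ a + (C : ℚ) - (R : ℚ) + 1 →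
      cnt ρ a c' + cnt σ b c' ≤ cnt ν a c')
    (c : ℚ) (hc1 : b + (L : ℚ) < c) (hc2 : c ≤ a + (C : ℚ) - (R : ℚ)) :
    cnt ρ a c + cnt σ b c + 1 ≤ cnt ν a c := by
  by_contra hcon
  push_neg at hcon
  set s := ν.card with hs
  set t := ρ.card with ht
  have hA := Hdom c (le_of_lt hc1) (by linarith)
  have heq : cnt ν a c = cnt ρ a c + cnt σ b c := by omega
  set d := ⌈c - a⌉ with hd
  set e := ⌈c - b⌉ with he
  have hcdν : cnt ν a c = Dcnt ν d := cnt_eq_Dcnt ν a c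
  have hcdρ : cnt ρ a c = Dcnt ρ d := cnt_eq_Dcnt ρ a c
  have hcdσ : cnt σ b c = Dcnt σ e := cnt_eq_Dcnt σ b c
  have hdC : d ≤ (C : ℤ) - (R : ℤ) := by
    apply Int.ceil_le.mpr
    push_cast
    linarith
  have heL : (L : ℤ) + 1 ≤ e := by
    have h1 : (L : ℤ) < e := Int.lt_ceil.mpr (by push_cast; linarith)
    omega
  have hclo : (d : ℚ) < c - a + 1 := Int.ceil_lt_add_one _
  have hcup : c - a ≤ (d : ℚ) := Int.le_ceil _
  have hceb : c - b ≤ (e : ℚ) := Int.le_ceil _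
  have hs1 : R + 1 ≤ s := hcol ▸ colLen_le_card ν
  have hed : (d : ℤ) + (s : ℤ) + (L : ℤ) - 1 ≤ e := by
    have h1 : ((d : ℤ) + (s : ℤ) + (L : ℤ) - 2 : ℤ) < e := by
      have h2 : ((d : ℚ) + (s : ℚ) + (L : ℚ) - 2 : ℚ) < (e : ℚ) := by linarith
      exact_mod_cast h2
    omega
  have hℓt : ρ.colLen 0 ≤ t := colLen_le_card ρ
  -- (H2) : dominance at threshold b + L
  have hH2 : t + Dcnt σ L ≤ s := by
    have hv : b + (L : ℚ) ≤ b + (L : ℚ) := le_refl _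
    have h0 := Hdom (b + L) hv (by linarith)
    have h1 : cnt ρ a (b + L) = t := by
      rw [cnt_eq_Dcnt]
      apply Dcnt_eq_card
      have h2 : ⌈b + (L : ℚ) - a⌉ ≤ 1 - (s : ℤ) := by
        apply Int.ceil_le.mpr
        push_cast
        linarith
      have h3 : (ρ.colLen 0 : ℤ) ≤ (t : ℤ) := by exact_mod_cast hℓt
      omega
    have h2 : cnt σ b (b + L) = Dcnt σ L := by
      rw [cnt_eq_Dcnt]
      congr 1
      rw [show b + (L : ℚ) - b = ((L : ℤ) : ℚ) by push_cast; ring, Int.ceil_intCast]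
    have h3 : cnt ν a (b + L) ≤ s := Finset.card_le_card (Finset.filter_subset _ _)
    omega
  by_cases hQ : Dcnt σ e = 0
  · -- propagation branch
    have heqd : Dcnt ν d = Dcnt ρ d := by omega
    set ℓ := ρ.colLen 0 with hℓ
    set jF : ℤ := min (-(R : ℤ)) (1 - (ℓ : ℤ)) with hjF
    by_cases hdjF : d ≤ jF
    · have hν : Dcnt ν d = s := by
        apply Dcnt_eq_card
        rw [hcol]
        push_cast
        omega
      have hρ : Dcnt ρ d = t := by
        apply Dcnt_eq_card
        have : jF ≤ 1 - (ℓ : ℤ) := min_le_right _ _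
        omega
      omega
    · push_neg at hdjF
      have hsR2 : R + 2 ≤ s := by
        by_contra hcon2
        have hsR : s = R + 1 := by omega
        have hC0 : C = 0 := by
          rcases Nat.eq_zero_or_pos C with h | h
          · exact h
          · exfalso
            have := rect_le_card ν R C hcol hrow
            have h2 : (R + 1) * 2 ≤ (R + 1) * (C + 1) := Nat.mul_le_mul_left _ (by omega)
            omega
        have h1 : (1 : ℤ) - (ℓ : ℤ) ≥ 1 - (t : ℤ) := by
          have : (ℓ : ℤ) ≤ (t : ℤ) := by exact_mod_cast hℓt
          omega
        have h2 : (R : ℤ) + 1 = (s : ℤ) := by exact_mod_cast hsR.symm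
        have h3 : d ≤ -(R : ℤ) := by
          have : (C : ℤ) = 0 := by exact_mod_cast hC0
          omega
        have h4 : (t : ℤ) < (s : ℤ) := by exact_mod_cast hst
        -- jF = -R since 1 - ℓ ≥ 1 - t ≥ 2 - s = 1 - R > -R
        have : jF = -(R : ℤ) := by
          rw [hjF]
          apply min_eq_left
          omega
        omega
      have hjF2 : 2 - (s : ℤ) ≤ jF := by
        have h1 : (ℓ : ℤ) ≤ (t : ℤ) := by exact_mod_cast hℓt
        have h2 : (t : ℤ) < (s : ℤ) := by exact_mod_cast hst
        have h3 : (R : ℤ) + 2 ≤ (s : ℤ) := by exact_mod_cast hsR2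
        rw [hjF]
        omega
      -- the downward induction
      have main : ∀ m : ℕ, jF ≤ d - (m : ℤ) →
          Dcnt ν (d - (m : ℤ)) = Dcnt ρ (d - (m : ℤ)) ∧
          dgc ν (d - (m : ℤ)) ≤ dgc ρ (d - (m : ℤ)) := by
        intro m
        induction m with
        | zero =>
          intro _
          have hup : Dcnt ρ (d + 1) ≤ Dcnt ν (d + 1) := by
            have hv : b + (L : ℚ) ≤ c - ((-1 : ℤ) : ℚ) := by push_cast; linarith
            have h0 := Hdom _ hv (by push_cast; linarith)
            rw [cnt_sub_int, cnt_sub_int, cnt_sub_int] at h0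
            simp only [sub_neg_eq_add] at h0
            rw [← hd] at h0
            omega
          have hν2 := Dcnt_split ν (d + 1)
          have hρ2 := Dcnt_split ρ (d + 1)
          simp only [add_sub_cancel_right] at hν2 hρ2
          constructor
          · simpa using heqd
          · simp only [Nat.cast_zero, sub_zero]
            omega
        | succ m ih =>
          intro hm1
          have hm : jF ≤ d - (m : ℤ) := by push_cast at hm1 ⊢; omega
          obtain ⟨hE, hI⟩ := ih hm
          set j : ℤ := d - (m : ℤ) with hj
          have hj' : d - ((m : ℕ) + 1 : ℕ) = j - 1 := by push_cast; omega
          rw [hj']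
          rw [hj'] at hm1
          have hjd : j ≤ d := by omega
          have hjC : j ≤ (C : ℤ) - R := by omega
          -- dominance at threshold c - (m+1)
          have hval : b + (L : ℚ) ≤ c - (((m : ℤ) + 1 : ℤ) : ℚ) := by
            have hjQ : ((jF : ℤ) : ℚ) ≥ 2 - (s : ℚ) := by exact_mod_cast hjF2
            have hjmQ : ((j : ℤ) : ℚ) - 1 ≥ ((jF : ℤ) : ℚ) := by exact_mod_cast hm1
            have hjdm : ((j : ℤ) : ℚ) = (d : ℚ) - (m : ℚ) := by rw [hj]; push_cast; ring
            push_cast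
            push_cast at hjdm hjmQ hjQ
            linarith
          have hdom' := Hdom _ hval (by push_cast; linarith)
          rw [cnt_sub_int, cnt_sub_int, cnt_sub_int] at hdom'
          have hj'' : ⌈c - a⌉ - ((m : ℤ) + 1) = j - 1 := by omega
          have hdom'' : Dcnt ρ (j - 1) ≤ Dcnt ν (j - 1) := by
            rw [hj''] at hdom'
            omega
          have hν2 := Dcnt_split ν j
          have hρ2 := Dcnt_split ρ j
          have hstep : dgc ν (j - 1) ≤ dgc ρ (j - 1) := by
            have hρstep := dgc_step ρ j
            by_cases hj0 : 1 ≤ j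
            · rw [if_pos hj0] at hρstep
              have hν1 : dgc ν (j - 1) = (R + 1) - (-(j - 1)).toNat :=
                dgc_corner ν R C hcol hrow (by omega)
              have hν0 : dgc ν j = (R + 1) - (-j).toNat :=
                dgc_corner ν R C hcol hrow hjC
              have e1 : (-(j - 1)).toNat = 0 := by omega
              have e2 : (-j).toNat = 0 := by omega
              rw [hν1, e1]
              rw [hν0, e2] at hI
              omega
            · rw [if_neg hj0] at hρstep
              push_neg at hj0
              have hν1 : dgc ν (j - 1) = (R + 1) - (-(j - 1)).toNat :=
                dgc_corner ν R C hcol hrow (by omega)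
              have hν0 : dgc ν j = (R + 1) - (-j).toNat :=
                dgc_corner ν R C hcol hrow hjC
              have e1 : ((-(j - 1)).toNat : ℤ) = -(j - 1) := Int.toNat_of_nonneg (by omega)
              have e2 : ((-j).toNat : ℤ) = -j := Int.toNat_of_nonneg (by omega)
              rw [hν1]
              rw [hν0] at hI
              omega
          constructor
          · omega
          · exact hstep
      have hfin := main (d - jF).toNat (by omega)
      have htn : ((d - jF).toNat : ℤ) = d - jF := Int.toNat_of_nonneg (by omega)
      rw [htn] at hfin
      simp only [sub_sub_cancel] at hfin
      obtain ⟨hfin1, _⟩ := hfin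
      have hν : Dcnt ν jF = s := by
        apply Dcnt_eq_card
        rw [hcol]
        have : jF ≤ -(R : ℤ) := min_le_left _ _
        push_cast
        omega
      have hρ : Dcnt ρ jF = t := by
        apply Dcnt_eq_card
        have : jF ≤ 1 - (ℓ : ℤ) := min_le_right _ _
        omega
      omega
  · -- branch: Dcnt σ e ≥ 1
    have hQ1 : 1 ≤ Dcnt σ e := by omega
    have hpos : 0 < (σ.cells.filter fun z => e ≤ (z.2 : ℤ) - (z.1 : ℤ)).card := by
      unfold Dcnt at hQ1; omega
    obtain ⟨z, hz⟩ := Finset.card_pos.mp hpos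
    obtain ⟨hzσ, hze⟩ := Finset.mem_filter.mp hz
    have hσrow : e.toNat < σ.rowLen 0 := by
      have h1 : z.2 < σ.rowLen 0 := cell_col_lt hzσ
      omega
    -- Dcnt σ L ≥ (e - L) + Dcnt σ e
    have hmid : e.toNat - L + Dcnt σ e ≤ Dcnt σ L := by
      have hsub : ((Finset.Ico L e.toNat).image (fun i : ℕ => ((0 : ℕ), i))) ∪
          (σ.cells.filter fun z => e ≤ (z.2 : ℤ) - (z.1 : ℤ)) ⊆
          (σ.cells.filter fun z => (L : ℤ) ≤ (z.2 : ℤ) - (z.1 : ℤ)) := by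
        intro w hw
        rcases Finset.mem_union.mp hw with hw1 | hw2
        · obtain ⟨i, hi, rfl⟩ := Finset.mem_image.mp hw1
          rw [Finset.mem_Ico] at hi
          refine Finset.mem_filter.mpr ⟨?_, ?_⟩
          · rw [cell_mem_iff]
            simp only
            omega
          · simp only
            omega
        · obtain ⟨hw2a, hw2b⟩ := Finset.mem_filter.mp hw2
          exact Finset.mem_filter.mpr ⟨hw2a, by omega⟩
      have hdisj : Disjoint ((Finset.Ico L e.toNat).image (fun i : ℕ => ((0 : ℕ), i)))
          (σ.cells.filter fun z => e ≤ (z.2 : ℤ) - (z.1 : ℤ)) := by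
        simp only [Finset.disjoint_left]
        intro w hw1 hw2
        obtain ⟨i, hi, rfl⟩ := Finset.mem_image.mp hw1
        rw [Finset.mem_Ico] at hi
        have := (Finset.mem_filter.mp hw2).2
        simp only at this
        omega
      have hcard : (((Finset.Ico L e.toNat).image (fun i : ℕ => ((0 : ℕ), i))) ∪
          (σ.cells.filter fun z => e ≤ (z.2 : ℤ) - (z.1 : ℤ))).card =
          (e.toNat - L) + Dcnt σ e := by
        rw [Finset.card_union_of_disjoint hdisj]
        congr 1
        rw [Finset.card_image_of_injOn (fun x _ y _ h => by simpa using (Prod.ext_iff.mp h).2),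
          Nat.card_Ico]
      calc e.toNat - L + Dcnt σ e = _ := hcard.symm
        _ ≤ _ := Finset.card_le_card hsub
    have hetn : (e.toNat : ℤ) = e := Int.toNat_of_nonneg (by omega)
    have hdt : d ≤ -(t : ℤ) := by
      have h2 : (t : ℤ) < (s : ℤ) := by exact_mod_cast hst
      have h3 : (t : ℤ) + (e.toNat - L : ℤ) + Dcnt σ e ≤ (s : ℤ) := by
        have := hH2
        have h4 : (e.toNat - L : ℕ) + Dcnt σ e ≤ Dcnt σ L := hmid
        push_cast
        have h5 : ((e.toNat - L : ℕ) : ℤ) = (e.toNat : ℤ) - L := by omega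
        push_cast at h4 ⊢
        omega
      have hQ1' : (1 : ℤ) ≤ Dcnt σ e := by exact_mod_cast hQ1
      omega
    have hDρ : Dcnt ρ d = t := by
      apply Dcnt_eq_card
      have h3 : (ρ.colLen 0 : ℤ) ≤ (t : ℤ) := by exact_mod_cast hℓt
      have h4 : (1 : ℤ) ≤ (s:ℤ) := by
        have : 0 < s := by omega
        exact_mod_cast this
      omega
    -- lowα
    have hsplitν : Dcnt ν d + (ν.cells.filter fun z => ¬ (d ≤ (z.2 : ℤ) - (z.1 : ℤ))).card = s := by
      unfold Dcnt
      exact Finset.card_filter_add_card_filter_not _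
    set lowν := (ν.cells.filter fun z => ¬ (d ≤ (z.2 : ℤ) - (z.1 : ℤ))).card with hlowdef
    have heqQ : Dcnt ν d = t + Dcnt σ e := by omega
    have hDσL : (t : ℤ) + ((e : ℤ) - L) + Dcnt σ e ≤ (s : ℤ) := by
      have h4 : ((e.toNat - L : ℕ) : ℤ) + Dcnt σ e ≤ (Dcnt σ L : ℤ) := by exact_mod_cast hmid
      have h5 : ((e.toNat - L : ℕ) : ℤ) = (e : ℤ) - L := by omega
      have h6 : (t : ℤ) + (Dcnt σ L : ℤ) ≤ (s : ℤ) := by exact_mod_cast hH2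
      omega
    have hlow1 : (e : ℤ) - L ≤ (lowν : ℤ) := by
      have h1 : (Dcnt ν d : ℤ) + (lowν : ℤ) = (s : ℤ) := by exact_mod_cast hsplitν
      have h2 : (Dcnt ν d : ℤ) = (t : ℤ) + (Dcnt σ e : ℤ) := by exact_mod_cast heqQ
      omega
    by_cases hp : (R : ℤ) + d ≤ 0
    · have hν : Dcnt ν d = s := by
        apply Dcnt_eq_card
        rw [hcol]
        push_cast
        omega
      have hlz : lowν = 0 := by omega
      rw [hlz] at hlow1
      simp only [Nat.cast_zero] at hlow1
      omega
    · push_neg at hp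
      set p := ((R : ℤ) + d).toNat with hpn
      have hptn : (p : ℤ) = (R : ℤ) + d := Int.toNat_of_nonneg (by omega)
      have hp1 : 1 ≤ p := by omega
      have hlow2 : lowν ≤ (R + 1) * p := by
        calc lowν ≤ ((Finset.range (R + 1)) ×ˢ (Finset.range p)).card := by
              apply Finset.card_le_card
              intro w hw
              obtain ⟨hw1, hw2⟩ := Finset.mem_filter.mp hw
              push_neg at hw2
              have hy : w.1 < R + 1 := by rw [← hcol]; exact cell_row_lt hw1
              refine Finset.mem_product.mpr ⟨Finset.mem_range.mpr hy, Finset.mem_range.mpr ?_⟩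
              omega
          _ = (R + 1) * p := by rw [Finset.card_product, Finset.card_range, Finset.card_range]
      have hrect := rect_le_card ν R C hcol hrow
      have hz1 : ((R : ℤ) + 1) * ((C : ℤ) + 1) ≤ (s : ℤ) := by exact_mod_cast hrect
      have hCp : (p : ℤ) + 1 ≤ (C : ℤ) + 1 := by omega
      have hmul : ((R : ℤ) + 1) * ((p : ℤ) + 1) ≤ ((R : ℤ) + 1) * ((C : ℤ) + 1) :=
        mul_le_mul_of_nonneg_left hCp (by positivity)
      have hexp : ((R : ℤ) + 1) * ((p : ℤ) + 1) = ((R : ℤ) + 1) * (p : ℤ) + (R + 1) := by ring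
      have hlow1' : (d : ℤ) + (s : ℤ) - 1 ≤ (lowν : ℤ) := by omega
      have hlow2' : (lowν : ℤ) ≤ ((R : ℤ) + 1) * (p : ℤ) := by exact_mod_cast hlow2
      have hp1' : (1 : ℤ) ≤ (p : ℤ) := by exact_mod_cast hp1
      linarith


lemma cnt_le_card (P : YoungDiagram) (χP c : ℚ) : cnt P χP c ≤ P.card :=
  Finset.card_le_card (Finset.filter_subset _ _)

lemma cnt_full (P : YoungDiagram) (χP c : ℚ) (h : c ≤ χP - (P.card : ℚ) + 1) :
    cnt P χP c = P.card := by
  unfold cnt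
  rw [Finset.filter_true_of_mem]
  intro z hz
  have h1 : z.1 + 1 ≤ P.card := le_trans (cell_row_lt hz) (colLen_le_card P)
  have h2 : ((z.1 : ℚ)) + 1 ≤ (P.card : ℚ) := by exact_mod_cast h1
  have h3 : (0 : ℚ) ≤ (z.2 : ℚ) := Nat.cast_nonneg _
  linarith

lemma cnt_zero_row (P : YoungDiagram) (χP c : ℚ) (h : χP + (P.rowLen 0 : ℚ) - 1 < c) :
    cnt P χP c = 0 := by
  unfold cnt
  rw [Finset.card_eq_zero, Finset.filter_eq_empty_iff]
  intro z hz
  have h1 : z.2 + 1 ≤ P.rowLen 0 := cell_col_lt hz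
  have h2 : ((z.2 : ℚ)) + 1 ≤ (P.rowLen 0 : ℚ) := by exact_mod_cast h1
  have h3 : (0 : ℚ) ≤ (z.1 : ℚ) := Nat.cast_nonneg _
  intro hc
  linarith

lemma cnt_zero_card (P : YoungDiagram) (χP c : ℚ) (h : χP + (P.card : ℚ) - 1 < c) :
    cnt P χP c = 0 := by
  apply cnt_zero_row
  have h1 : (P.rowLen 0 : ℚ) ≤ (P.card : ℚ) := by exact_mod_cast rowLen_le_card P
  linarith

def Nf {r : ℕ} (χ : Fin r → ℚ) (X : Fin r → YoungDiagram) (c : ℚ) : ℕ :=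
  ((mbBoxes X).filter fun b => c ≤ cont χ b).card

lemma Nf_eq_sum {r : ℕ} (χ : Fin r → ℚ) (X : Fin r → YoungDiagram) (c : ℚ) :
    Nf χ X c = ∑ i, cnt (X i) (χ i) c := by
  unfold Nf mbBoxes
  rw [Finset.filter_biUnion]
  rw [Finset.card_biUnion]
  · refine Finset.sum_congr rfl fun i _ => ?_
    have himg : ((X i).cells.image fun z => ((i, z) : Fin r × ℕ × ℕ)).filter
        (fun b => c ≤ cont χ b) =
        ((X i).cells.filter fun z => c ≤ χ i + (z.2 : ℚ) - (z.1 : ℚ)).image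
        (fun z => ((i, z) : Fin r × ℕ × ℕ)) := by
      ext b
      simp only [Finset.mem_filter, Finset.mem_image]
      constructor
      · rintro ⟨⟨z, hz, rfl⟩, hb⟩
        exact ⟨z, ⟨hz, hb⟩, rfl⟩
      · rintro ⟨z, ⟨hz, hcz⟩, rfl⟩
        exact ⟨⟨z, hz, rfl⟩, hcz⟩
    rw [himg, Finset.card_image_of_injective _ (fun u v h => by simpa [Prod.ext_iff] using h)]
    rfl
  · intro i _ j _ hij
    simp only [Finset.disjoint_left, Finset.mem_filter, Finset.mem_image]
    rintro b ⟨⟨z, _, rfl⟩, _⟩ ⟨⟨d, _, h⟩, _⟩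
    simp only [Prod.ext_iff] at h
    exact hij h.1.symm


lemma Nf_split {r : ℕ} (χ : Fin r → ℚ) (X : Fin r → YoungDiagram) (c : ℚ)
    (k k1 : Fin r) (hkk1 : (k1 : ℕ) = (k : ℕ) + 1)
    (hfull : ∀ i : Fin r, (i : ℕ) < (k : ℕ) → cnt (X i) (χ i) c = (X i).card)
    (hzero : ∀ i : Fin r, (k : ℕ) < (i : ℕ) → i ≠ k1 → cnt (X i) (χ i) c = 0) :
    Nf χ X c = (∑ i ∈ Finset.univ.filter (fun i : Fin r => (i : ℕ) < (k : ℕ)), (X i).card)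
      + cnt (X k) (χ k) c + cnt (X k1) (χ k1) c := by
  classical
  rw [Nf_eq_sum]
  rw [← Finset.sum_filter_add_sum_filter_not Finset.univ (fun i : Fin r => (i : ℕ) < (k : ℕ))]
  have h1 : ∑ i ∈ Finset.univ.filter (fun i : Fin r => (i : ℕ) < (k : ℕ)), cnt (X i) (χ i) c
      = ∑ i ∈ Finset.univ.filter (fun i : Fin r => (i : ℕ) < (k : ℕ)), (X i).card := by
    refine Finset.sum_congr rfl fun i hi => hfull i ?_
    exact (Finset.mem_filter.mp hi).2
  have hkne : k ≠ k1 := by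
    intro h
    rw [h] at hkk1
    omega
  have h2 : ∑ i ∈ Finset.univ.filter (fun i : Fin r => ¬ (i : ℕ) < (k : ℕ)), cnt (X i) (χ i) c
      = cnt (X k) (χ k) c + cnt (X k1) (χ k1) c := by
    have hsub : ({k, k1} : Finset (Fin r)) ⊆
        Finset.univ.filter (fun i : Fin r => ¬ (i : ℕ) < (k : ℕ)) := by
      intro i hi
      rcases Finset.mem_insert.mp hi with h | h
      · subst h; simp
      · rw [Finset.mem_singleton] at h
        subst h
        simp only [Finset.mem_filter, Finset.mem_univ, true_and]
        omega
    rw [← Finset.sum_subset hsub]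
    · rw [Finset.sum_pair hkne]
    · intro i hi hni
      apply hzero
      · have h3 := (Finset.mem_filter.mp hi).2
        have h4 : i ≠ k := fun h => hni (by rw [h]; simp)
        have h5 : (i : ℕ) ≠ (k : ℕ) := fun h => h4 (Fin.ext h)
        omega
      · intro h
        exact hni (by rw [h]; simp)
  rw [h1, h2]
  ring

/-- dropping the lowermost removable box of λ^k into the first row of
λ^{k+1} gives Λ' with Λ ⊳_χ Λ' and Λ' ≥_χ M. -/
theorem drop_box_step (n r : ℕ) (χ : Fin r → ℚ) (hasym : asymptotic n χ)
    (Λ M : Fin r → YoungDiagram) (hΛ : isMP n Λ) (hM : isMP n M)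
    (hge : contGE χ Λ M) (hne : Λ ≠ M)
    (k : Fin r) (hk : (k : ℕ) + 1 < r)
    (hlt : ∀ i, i < k → (Λ i).card = (M i).card) (hgt : (M k).card < (Λ k).card)
    (Λ' : Fin r → YoungDiagram)
    (hother : ∀ i, i ≠ k → i ≠ ⟨(k : ℕ) + 1, hk⟩ → Λ' i = Λ i)
    (hrm : (Λ' k).cells =
      (Λ k).cells.erase
        ((Λ k).colLen 0 - 1, (Λ k).rowLen ((Λ k).colLen 0 - 1) - 1))
    (hadd : (Λ' ⟨(k : ℕ) + 1, hk⟩).cells =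
      insert ((0 : ℕ), (Λ ⟨(k : ℕ) + 1, hk⟩).rowLen 0) (Λ ⟨(k : ℕ) + 1, hk⟩).cells) :
    (adjacent Λ Λ' ∧ contGE χ Λ Λ' ∧ Λ ≠ Λ') ∧ contGE χ Λ' M := by
  classical
  set k1 : Fin r := ⟨(k : ℕ) + 1, hk⟩ with hk1def
  have hkk1 : (k1 : ℕ) = (k : ℕ) + 1 := rfl
  have hkne : k ≠ k1 := by
    intro h
    have : (k : ℕ) = (k1 : ℕ) := by rw [h]
    omega
  have hΛn : ∑ i, (Λ i).card = n := hΛ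
  have hMn : ∑ i, (M i).card = n := hM
  have hcardΛle : ∀ i, (Λ i).card ≤ n := by
    intro i
    rw [← hΛn]
    exact Finset.single_le_sum (f := fun i => (Λ i).card) (fun i _ => Nat.zero_le _)
      (Finset.mem_univ i)
  have hcardMle : ∀ i, (M i).card ≤ n := by
    intro i
    rw [← hMn]
    exact Finset.single_le_sum (f := fun i => (M i).card) (fun i _ => Nat.zero_le _)
      (Finset.mem_univ i)
  have htwoΛ : ∀ i j : Fin r, i ≠ j → (Λ i).card + (Λ j).card ≤ n := by
    intro i j hij
    have h1 : ∑ x ∈ ({i, j} : Finset (Fin r)), (Λ x).card ≤ ∑ x, (Λ x).card :=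
      Finset.sum_le_sum_of_subset_of_nonneg (Finset.subset_univ _)
        (fun _ _ _ => Nat.zero_le _)
    rw [Finset.sum_pair hij, hΛn] at h1
    exact h1
  have htwoM : ∀ i j : Fin r, i ≠ j → (M i).card + (M j).card ≤ n := by
    intro i j hij
    have h1 : ∑ x ∈ ({i, j} : Finset (Fin r)), (M x).card ≤ ∑ x, (M x).card :=
      Finset.sum_le_sum_of_subset_of_nonneg (Finset.subset_univ _)
        (fun _ _ _ => Nat.zero_le _)
    rw [Finset.sum_pair hij, hMn] at h1
    exact h1
  have hn1 : 1 ≤ n := by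
    have := hcardΛle k
    omega
  have hchain : ∀ i j : Fin r, (i : ℕ) < (j : ℕ) → χ j + ((n : ℚ) - 1) < χ i := by
    have H : ∀ m : ℕ, ∀ i j : Fin r, (j : ℕ) = (i : ℕ) + m + 1 → χ j + ((n : ℚ) - 1) < χ i := by
      intro m
      induction m with
      | zero =>
        intro i j hj
        have hlt' : (i : ℕ) + 1 < r := by
          have := j.isLt
          omega
        have h := hasym (i : ℕ) hlt'
        have hi : (⟨(i : ℕ), Nat.lt_of_succ_lt hlt'⟩ : Fin r) = i := by
          apply Fin.ext
          rfl
        have hjj : (⟨(i : ℕ) + 1, hlt'⟩ : Fin r) = j := by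
          apply Fin.ext
          simp [hj]
        rw [hi, hjj] at h
        linarith
      | succ m ih =>
        intro i j hj
        have hmid_lt : (i : ℕ) + 1 < r := by
          have := j.isLt
          omega
        set mid : Fin r := ⟨(i : ℕ) + 1, hmid_lt⟩ with hmid
        have h1 := hasym (i : ℕ) hmid_lt
        have hi : (⟨(i : ℕ), Nat.lt_of_succ_lt hmid_lt⟩ : Fin r) = i := by
          apply Fin.ext
          rfl
        rw [hi] at h1
        have h2 := ih mid j (by simp [hmid]; omega)
        have hn1' : (1 : ℚ) ≤ (n : ℚ) := by exact_mod_cast hn1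
        linarith
    intro i j hij
    obtain ⟨m, hm⟩ : ∃ m, (j : ℕ) = (i : ℕ) + m + 1 := ⟨(j : ℕ) - (i : ℕ) - 1, by omega⟩
    exact H m i j hm
  -- corner data
  have hcards : 1 ≤ (Λ k).card := by omega
  have hcolpos : 1 ≤ (Λ k).colLen 0 := by
    obtain ⟨z, hz⟩ := Finset.card_pos.mp (show 0 < (Λ k).cells.card from hcards)
    have := cell_row_lt hz
    omega
  set R := (Λ k).colLen 0 - 1 with hR
  set C := (Λ k).rowLen R - 1 with hC
  set L := (Λ k1).rowLen 0 with hL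
  have hcol : (Λ k).colLen 0 = R + 1 := by omega
  have hrowpos : 1 ≤ (Λ k).rowLen R := by
    have hmem : (R, 0) ∈ Λ k := YoungDiagram.mem_iff_lt_colLen.mpr (by omega)
    rw [YoungDiagram.mem_iff_lt_rowLen] at hmem
    omega
  have hrowR : (Λ k).rowLen R = C + 1 := by omega
  have hb0 : (R, C) ∈ (Λ k).cells := by
    rw [YoungDiagram.mem_cells, YoungDiagram.mem_iff_lt_rowLen]
    omega
  have hbnew_not : ((0 : ℕ), L) ∉ (Λ k1).cells := by
    rw [YoungDiagram.mem_cells, YoungDiagram.mem_iff_lt_rowLen]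
    omega
  have hR1 : R + 1 ≤ (Λ k).card := hcol ▸ colLen_le_card (Λ k)
  have hC1 : C + 1 ≤ (Λ k).card := by
    have h1 : (Λ k).rowLen R ≤ (Λ k).rowLen 0 := (Λ k).rowLen_anti 0 R (Nat.zero_le _)
    have h2 := rowLen_le_card (Λ k)
    omega
  have hLle : L ≤ (Λ k1).card := rowLen_le_card (Λ k1)
  have hsLn : (Λ k).card + L ≤ n := by
    have := htwoΛ k k1 hkne
    omega
  set δ := χ k1 + (L : ℚ) with hδdef
  set γ := χ k + (C : ℚ) - (R : ℚ) with hγdef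
  have hchkk1 := hchain k k1 (by omega)
  have hgap : ((Λ k).card : ℚ) + (L : ℚ) - 1 < χ k - χ k1 := by
    have h1 : ((Λ k).card : ℚ) + (L : ℚ) ≤ (n : ℚ) := by exact_mod_cast hsLn
    linarith
  have hδγ : δ < γ := by
    have h1 : ((R : ℚ)) + 1 ≤ ((Λ k).card : ℚ) := by exact_mod_cast hR1
    have h2 : (0 : ℚ) ≤ (C : ℚ) := Nat.cast_nonneg _
    rw [hδdef, hγdef]
    linarith
  have hγub : γ + 1 ≤ χ k + ((Λ k).card : ℚ) := by
    have h1 : ((C : ℚ)) + 1 ≤ ((Λ k).card : ℚ) := by exact_mod_cast hC1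
    have h2 : (0 : ℚ) ≤ (R : ℚ) := Nat.cast_nonneg _
    rw [hγdef]
    linarith
  have hcardΛb : (mbBoxes Λ).card = n := by rw [card_mbBoxes, hΛn]
  have hcardMb : (mbBoxes M).card = n := by rw [card_mbBoxes, hMn]
  obtain ⟨e0, he0⟩ := hge
  have hNdom : ∀ c' : ℚ, Nf χ M c' ≤ Nf χ Λ c' := fun c' =>
    count_le_of_equiv (cont χ) (cont χ) _ _ e0 (fun a => he0 a) c'
  -- split identities
  have hfullΛ : ∀ c', c' ≤ γ + 1 → ∀ i : Fin r, (i : ℕ) < (k : ℕ) →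
      cnt (Λ i) (χ i) c' = (Λ i).card := by
    intro c' h2 i hik
    apply cnt_full
    have hik' : i ≠ k := by intro h; rw [h] at hik; omega
    have hch := hchain i k hik
    have htw : ((Λ i).card : ℚ) + ((Λ k).card : ℚ) ≤ (n : ℚ) := by
      exact_mod_cast htwoΛ i k hik'
    linarith
  have hfullM : ∀ c', c' ≤ γ + 1 → ∀ i : Fin r, (i : ℕ) < (k : ℕ) →
      cnt (M i) (χ i) c' = (M i).card := by
    intro c' h2 i hik
    apply cnt_full
    have hik' : i ≠ k := by intro h; rw [h] at hik; omega
    have hch := hchain i k hik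
    have heqc : (M i).card = (Λ i).card := (hlt i hik).symm
    have htw : ((Λ i).card : ℚ) + ((Λ k).card : ℚ) ≤ (n : ℚ) := by
      exact_mod_cast htwoΛ i k hik'
    rw [heqc]
    push_cast
    linarith
  have hzeroX : ∀ (X : Fin r → YoungDiagram), (∀ i, (X i).card ≤ n) →
      ∀ c', δ ≤ c' → ∀ i : Fin r, (k : ℕ) < (i : ℕ) → i ≠ k1 →
      cnt (X i) (χ i) c' = 0 := by
    intro X hXle c' h1 i hik hik1
    apply cnt_zero_card
    have hik1' : (k1 : ℕ) < (i : ℕ) := by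
      have : (i : ℕ) ≠ (k1 : ℕ) := fun h => hik1 (Fin.ext h)
      omega
    have hch := hchain k1 i hik1'
    have hXi : ((X i).card : ℚ) ≤ (n : ℚ) := by exact_mod_cast hXle i
    have hL0 : (0 : ℚ) ≤ (L : ℚ) := Nat.cast_nonneg _
    rw [hδdef] at h1
    linarith
  have hsplitΛ : ∀ c', δ ≤ c' → c' ≤ γ + 1 → Nf χ Λ c' =
      (∑ i ∈ Finset.univ.filter (fun i : Fin r => (i : ℕ) < (k : ℕ)), (Λ i).card)
        + cnt (Λ k) (χ k) c' := by
    intro c' h1 h2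
    rw [Nf_split χ Λ c' k k1 hkk1 (hfullΛ c' h2) (hzeroX Λ hcardΛle c' h1)]
    have hz1 : cnt (Λ k1) (χ k1) c' = 0 := by
      apply cnt_zero_row
      rw [hδdef] at h1
      rw [← hL]
      linarith
    omega
  have hsplitM : ∀ c', δ ≤ c' → c' ≤ γ + 1 → Nf χ M c' =
      (∑ i ∈ Finset.univ.filter (fun i : Fin r => (i : ℕ) < (k : ℕ)), (Λ i).card)
        + cnt (M k) (χ k) c' + cnt (M k1) (χ k1) c' := by
    intro c' h1 h2
    rw [Nf_split χ M c' k k1 hkk1 (hfullM c' h2) (hzeroX M hcardMle c' h1)]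
    have hSeq : ∑ i ∈ Finset.univ.filter (fun i : Fin r => (i : ℕ) < (k : ℕ)), (M i).card
        = ∑ i ∈ Finset.univ.filter (fun i : Fin r => (i : ℕ) < (k : ℕ)), (Λ i).card := by
      refine Finset.sum_congr rfl fun i hi => ?_
      exact (hlt i (Finset.mem_filter.mp hi).2).symm
    rw [hSeq]
  have hHdom : ∀ c', χ k1 + (L : ℚ) ≤ c' → c' ≤ χ k + (C : ℚ) - (R : ℚ) + 1 →
      cnt (M k) (χ k) c' + cnt (M k1) (χ k1) c' ≤ cnt (Λ k) (χ k) c' := by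
    intro c' h1 h2
    have hd := hNdom c'
    rw [hsplitΛ c' h1 h2, hsplitM c' h1 h2] at hd
    omega
  have hstrict : ∀ c', δ < c' → c' ≤ γ → Nf χ M c' + 1 ≤ Nf χ Λ c' := by
    intro c' h1 h2
    have hloc := local_strict (Λ k) (M k) (M k1) L (χ k) (χ k1) hgt hgap R C hcol hrowR
      hHdom c' h1 h2
    rw [hsplitΛ c' (le_of_lt h1) (by linarith), hsplitM c' (le_of_lt h1) (by linarith)]
    omega
  -- the moved boxes
  set b0 : Fin r × ℕ × ℕ := (k, (R, C)) with hb0def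
  set bn : Fin r × ℕ × ℕ := (k1, ((0 : ℕ), L)) with hbndef
  have hb0mem : b0 ∈ mbBoxes Λ := mem_mbBoxes.mpr hb0
  have hbn_not : bn ∉ mbBoxes Λ := fun h => hbnew_not (mem_mbBoxes.mp h)
  have hmb : mbBoxes Λ' = insert bn ((mbBoxes Λ).erase b0) := by
    ext ⟨i, z⟩
    rw [mem_mbBoxes, Finset.mem_insert, Finset.mem_erase, mem_mbBoxes]
    by_cases hik : i = k
    · subst hik
      rw [hrm]
      simp only [Finset.mem_erase]
      constructor
      · rintro ⟨hzne, hzmem⟩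
        exact Or.inr ⟨fun hcon => hzne (congrArg Prod.snd hcon), hzmem⟩
      · rintro (h | ⟨hne', hzmem⟩)
        · exact absurd (congrArg Prod.fst h) hkne
        · exact ⟨fun hcon => hne' (by rw [hcon, hb0def]), hzmem⟩
    · by_cases hik1 : i = k1
      · subst hik1
        rw [hadd]
        rw [Finset.mem_insert]
        constructor
        · rintro (h | h)
          · refine Or.inl ?_
            rw [hbndef]
            exact Prod.ext_iff.mpr ⟨rfl, h⟩
          · exact Or.inr ⟨fun hcon => hkne (congrArg Prod.fst hcon).symm, h⟩
        · rintro (h | ⟨_, h⟩)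
          · exact Or.inl (congrArg Prod.snd h)
          · exact Or.inr h
      · rw [hother i hik hik1]
        constructor
        · intro h
          refine Or.inr ⟨?_, h⟩
          intro hcon
          exact hik (congrArg Prod.fst hcon)
        · rintro (h | ⟨_, h⟩)
          · exact absurd (congrArg Prod.fst h) hik1
          · exact h
  have hcardΛ'b : (mbBoxes Λ').card = n := by
    rw [hmb, Finset.card_insert_of_notMem, Finset.card_erase_of_mem hb0mem, hcardΛb]
    · omega
    · intro h
      exact hbn_not (Finset.mem_of_mem_erase h)
  have hcont_b0 : cont χ b0 = γ := by
    rw [hb0def, hγdef]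
    simp [cont]
  have hcont_bn : cont χ bn = δ := by
    rw [hbndef, hδdef]
    simp [cont]
  have hNrel : ∀ c', Nf χ Λ' c' + (if c' ≤ γ then 1 else 0)
      = Nf χ Λ c' + (if c' ≤ δ then 1 else 0) := by
    intro c'
    unfold Nf
    rw [hmb, Finset.filter_insert]
    have herase : ((mbBoxes Λ).erase b0).filter (fun b => c' ≤ cont χ b) =
        ((mbBoxes Λ).filter (fun b => c' ≤ cont χ b)).erase b0 := Finset.filter_erase _ _ _
    by_cases h1 : c' ≤ cont χ bn
    · have h1' : c' ≤ δ := hcont_bn ▸ h1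
      have h1γ : c' ≤ γ := le_trans h1' (le_of_lt hδγ)
      rw [if_pos h1, if_pos h1', if_pos h1γ]
      rw [Finset.card_insert_of_notMem (by
        intro hc
        exact hbn_not (Finset.mem_of_mem_erase (Finset.mem_filter.mp hc).1))]
      rw [herase]
      have hb0f : b0 ∈ (mbBoxes Λ).filter (fun b => c' ≤ cont χ b) :=
        Finset.mem_filter.mpr ⟨hb0mem, by rw [hcont_b0]; exact h1γ⟩
      rw [Finset.card_erase_of_mem hb0f]
      have hpos : 1 ≤ ((mbBoxes Λ).filter (fun b => c' ≤ cont χ b)).card :=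
        Finset.card_pos.mpr ⟨b0, hb0f⟩
      omega
    · have h1' : ¬ c' ≤ δ := fun h => h1 (hcont_bn ▸ h)
      rw [if_neg h1, if_neg h1', herase]
      by_cases h2 : c' ≤ γ
      · rw [if_pos h2]
        have hb0f : b0 ∈ (mbBoxes Λ).filter (fun b => c' ≤ cont χ b) :=
          Finset.mem_filter.mpr ⟨hb0mem, by rw [hcont_b0]; exact h2⟩
        rw [Finset.card_erase_of_mem hb0f]
        have hpos : 1 ≤ ((mbBoxes Λ).filter (fun b => c' ≤ cont χ b)).card :=
          Finset.card_pos.mpr ⟨b0, hb0f⟩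
        omega
      · rw [if_neg h2]
        rw [Finset.erase_eq_of_notMem (by
          intro hc
          have := (Finset.mem_filter.mp hc).2
          rw [hcont_b0] at this
          exact h2 this)]
  have hcountMΛ' : ∀ c', Nf χ M c' ≤ Nf χ Λ' c' := by
    intro c'
    have hrel := hNrel c'
    have hdom := hNdom c'
    by_cases h1 : c' ≤ δ
    · have h2 : c' ≤ γ := le_trans h1 (le_of_lt hδγ)
      rw [if_pos h1, if_pos h2] at hrel
      omega
    · push_neg at h1
      by_cases h2 : c' ≤ γ
      · have hstr := hstrict c' h1 h2
        rw [if_pos h2, if_neg (not_le.mpr h1)] at hrel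
        omega
      · rw [if_neg h2, if_neg (not_le.mpr h1)] at hrel
        omega
  have hcountΛ'Λ : ∀ c', Nf χ Λ' c' ≤ Nf χ Λ c' := by
    intro c'
    have hrel := hNrel c'
    by_cases h1 : c' ≤ δ
    · have h2 : c' ≤ γ := le_trans h1 (le_of_lt hδγ)
      rw [if_pos h1, if_pos h2] at hrel
      omega
    · rw [if_neg h1] at hrel
      by_cases h2 : c' ≤ γ
      · rw [if_pos h2] at hrel
        omega
      · rw [if_neg h2] at hrel
        omega
  refine ⟨⟨?_, ?_, ?_⟩, ?_⟩
  · -- adjacent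
    refine ⟨k, k1, -(R : ℤ), (L : ℤ) - (C : ℤ), ?_, ?_, ?_⟩
    · intro i hik z hz
      by_cases hik1 : i = k1
      · subst hik1
        rw [hadd]
        exact Finset.mem_insert_of_mem hz
      · rw [hother i hik hik1]
        exact hz
    · intro i hik1 z hz
      by_cases hik : i = k
      · subst hik
        rw [hrm] at hz
        exact Finset.mem_of_mem_erase hz
      · rw [hother i hik hik1] at hz
        exact hz
    · intro y x
      rw [hrm, hadd]
      constructor
      · rintro ⟨hmem, hnot⟩
        have hyx : (y, x) = ((R : ℕ), (C : ℕ)) := by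
          by_contra hne'
          exact hnot (Finset.mem_erase.mpr ⟨hne', hmem⟩)
        have hy : y = R := congrArg Prod.fst hyx
        have hx : x = C := congrArg Prod.snd hyx
        refine ⟨0, L, ⟨Finset.mem_insert_self _ _, hbnew_not⟩, ?_, ?_⟩
        · rw [hy]; push_cast; ring
        · rw [hx]; push_cast; ring
      · rintro ⟨y', x', ⟨hmem', hnot'⟩, hy', hx'⟩
        have h0L : (y', x') = ((0 : ℕ), L) := by
          rcases Finset.mem_insert.mp hmem' with h | h
          · exact h
          · exact absurd h hnot'
        have hy0 : y' = 0 := congrArg Prod.fst h0L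
        have hxL : x' = L := congrArg Prod.snd h0L
        rw [hy0] at hy'
        rw [hxL] at hx'
        have hyR : y = R := by push_cast at hy'; omega
        have hxC : x = C := by push_cast at hx'; omega
        rw [hyR, hxC]
        exact ⟨hb0, Finset.notMem_erase _ _⟩
  · -- contGE Λ Λ'
    obtain ⟨e1, he1⟩ := exists_equiv_of_counts (cont χ) (cont χ) (mbBoxes Λ) (mbBoxes Λ')
      (by rw [hcardΛb, hcardΛ'b]) (fun c' => hcountΛ'Λ c')
    exact ⟨e1, fun bb => he1 bb⟩
  · -- Λ ≠ Λ'
    intro heq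
    have h2 : ((R : ℕ), (C : ℕ)) ∈ (Λ k).cells.erase ((R : ℕ), (C : ℕ)) := by
      rw [← hrm, ← heq]
      exact hb0
    exact absurd (Finset.mem_erase.mp h2).1 (by simp)
  · -- contGE Λ' M
    obtain ⟨e2, he2⟩ := exists_equiv_of_counts (cont χ) (cont χ) (mbBoxes Λ') (mbBoxes M)
      (by rw [hcardΛ'b, hcardMb]) (fun c' => hcountMΛ' c')
    exact ⟨e2, fun bb => he2 bb⟩
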